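/- arXiv:1204.2201 — 7 statements merged into one kernel-verified Lean document; each statement's English description precedes it below -/
import Mathlib

section
/- Let p, q, r, v and ⊞ be five pairwise distinct letters and let e = p⊞rvrvr⊞q. (1) In any equality-free 2-partition of e in which the length-1 string ⊞ is not a selected string, either the length-1 string r is a selected string, or both length-1 strings p and q are selected strings. (2) There exist equality-free 2-partitions P₁ and P₂ of e, neither of which selects ⊞ as a length-1 string, such that P₁ selects the length-1 string r but selects neither p nor q as length-1 strings, and P₂ selects the length-1 strings p and q but does not select r as a length-1 string. -/
/-!
In a 2-partition of `p⊞rvrvr⊞q` selecting neither `[p]` nor `[r]`, the blocks covering the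
prefix `p⊞rvrv` are forced to be `p⊞`, `rv`, `rv`, so a block repeats. Reversing the word and
every block exchanges `p` and `q`, which gives `[q]` by the same argument.
-/

/-- `P` is a `K`-partition of the string `w`: a sequence of nonempty strings of
length at most `K` whose concatenation is `w`. -/
def IsPartition {α : Type*} (K : ℕ) (w : List α) (P : List (List α)) : Prop :=
  P.flatten = w ∧ ∀ p ∈ P, p ≠ [] ∧ p.length ≤ K

/-- A partition is equality-free if no two selected strings at distinct
occurrences are equal. -/
def EqFree {α : Type*} (P : List (List α)) : Prop := P.Pairwise (· ≠ ·)

section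

variable {α : Type*}

namespace IsPartition

theorem reverse {K : ℕ} {w : List α} {P : List (List α)} (h : IsPartition K w P) :
    IsPartition K w.reverse (P.map List.reverse).reverse := by
  refine ⟨by rw [← h.1, List.reverse_flatten], fun s hs => ?_⟩
  obtain ⟨t, ht, rfl⟩ := List.mem_map.1 (List.mem_reverse.1 hs)
  simpa using h.2 t ht

theorem head_singleton_or_pair {a : α} {w : List α} {P : List (List α)}
    (h : IsPartition 2 (a :: w) P) :
    ∃ P', (P = [a] :: P' ∧ IsPartition 2 w P') ∨
      ∃ b w', w = b :: w' ∧ P = [a, b] :: P' ∧ IsPartition 2 w' P' := by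
  obtain ⟨hflat, hmem⟩ := h
  match P, hflat, hmem with
  | [] :: _, _, hmem => exact absurd rfl (hmem [] List.mem_cons_self).1
  | [x] :: P', hflat, hmem =>
    simp only [List.flatten_cons, List.singleton_append, List.cons.injEq] at hflat
    exact ⟨P', .inl ⟨by rw [hflat.1], hflat.2, fun s hs => hmem s (.tail _ hs)⟩⟩
  | [x, y] :: P', hflat, hmem =>
    simp only [List.flatten_cons, List.cons_append, List.nil_append, List.cons.injEq] at hflat
    obtain ⟨rfl, rfl⟩ := hflat
    exact ⟨P', .inr ⟨y, _, rfl, rfl, rfl, fun s hs => hmem s (.tail _ hs)⟩⟩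
  | (_ :: _ :: _ :: _) :: _, _, hmem => simpa using (hmem _ List.mem_cons_self).2

theorem singleton_mem_or_singleton_mem {a b c d : α} {w : List α} {P : List (List α)}
    (hP : IsPartition 2 (a :: b :: c :: d :: c :: d :: w) P) (hfree : EqFree P) :
    [a] ∈ P ∨ [c] ∈ P := by
  obtain ⟨P₁, ⟨rfl, -⟩ | ⟨_, _, hw₁, rfl, hP₁⟩⟩ := hP.head_singleton_or_pair
  · simp
  obtain ⟨rfl, rfl⟩ := List.cons.inj hw₁
  obtain ⟨P₂, ⟨rfl, -⟩ | ⟨_, _, hw₂, rfl, hP₂⟩⟩ := hP₁.head_singleton_or_pair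
  · simp
  obtain ⟨rfl, rfl⟩ := List.cons.inj hw₂
  obtain ⟨P₃, ⟨rfl, -⟩ | ⟨_, _, hw₃, rfl, -⟩⟩ := hP₂.head_singleton_or_pair
  · simp
  obtain ⟨rfl, -⟩ := List.cons.inj hw₃
  simp [EqFree] at hfree

end IsPartition

theorem EqFree.reverse {P : List (List α)} (h : EqFree P) :
    EqFree (P.map List.reverse).reverse := by
  simpa [EqFree, List.pairwise_reverse, List.pairwise_map, eq_comm] using h

theorem singleton_mem_reverse_iff {a : α} {P : List (List α)} :
    [a] ∈ (P.map List.reverse).reverse ↔ [a] ∈ P := by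
  simp

end

theorem stmt_1 {α : Type*} (p q r v plus : α)
    (hpq : p ≠ q) (hpr : p ≠ r) (hpv : p ≠ v) (hpp : p ≠ plus)
    (hqr : q ≠ r) (hqv : q ≠ v) (hqp : q ≠ plus)
    (hrv : r ≠ v) (hrp : r ≠ plus) (hvp : v ≠ plus) :
    (∀ P : List (List α), IsPartition 2 [p, plus, r, v, r, v, r, plus, q] P →
      EqFree P → [plus] ∉ P → ([r] ∈ P ∨ ([p] ∈ P ∧ [q] ∈ P))) ∧
    (∃ P₁ : List (List α), IsPartition 2 [p, plus, r, v, r, v, r, plus, q] P₁ ∧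
      EqFree P₁ ∧ [plus] ∉ P₁ ∧ [r] ∈ P₁ ∧ [p] ∉ P₁ ∧ [q] ∉ P₁) ∧
    (∃ P₂ : List (List α), IsPartition 2 [p, plus, r, v, r, v, r, plus, q] P₂ ∧
      EqFree P₂ ∧ [plus] ∉ P₂ ∧ [p] ∈ P₂ ∧ [q] ∈ P₂ ∧ [r] ∉ P₂) := by
  refine ⟨fun P hP hfree _ => ?_, ?_, ?_⟩
  · by_cases hr : [r] ∈ P
    · exact .inl hr
    have hp := (hP.singleton_mem_or_singleton_mem hfree).resolve_right hr
    have hq := (hP.reverse.singleton_mem_or_singleton_mem hfree.reverse).resolve_right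
      (by rwa [singleton_mem_reverse_iff])
    exact .inr ⟨hp, singleton_mem_reverse_iff.1 hq⟩
  · refine ⟨[[p, plus], [r, v], [r], [v, r], [plus, q]], ⟨rfl, by simp⟩, ?_⟩
    simp [EqFree, *, eq_comm]
  · refine ⟨[[p], [plus, r], [v, r], [v], [r, plus], [q]], ⟨rfl, by simp⟩, ?_⟩
    simp [EqFree, *, eq_comm]
end

section
/- Let w₁,…,w_ℓ be nonempty strings over an alphabet Σ and let ⊡, ⊟, d₁,…,d_{ℓ−1} be pairwise distinct letters not in Σ. Let w̄ = ⊡⊡⊡⊡⊟ w₁ d₁⊡⊡d₁ w₂ d₂⊡⊡d₂ ⋯ d_{ℓ−1}⊡⊡d_{ℓ−1} w_ℓ. Then w̄ has an equality-free 2-partition if and only if the multiset {w₁,…,w_ℓ} has an equality-free 2-partition. -/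
/-- A `K`-partition of a finite multiset (list) of strings: a choice of a
`K`-partition of each string. -/
def IsMultiPartition {α : Type*} (K : ℕ) (ws : List (List α))
    (Ps : List (List (List α))) : Prop :=
  List.Forall₂ (IsPartition K) ws Ps

/-- `glue d k [w₁, …, w_ℓ] = w₁ ++ d k ++ w₂ ++ d (k+1) ++ ⋯ ++ d (k+ℓ-2) ++ w_ℓ`:
interleaves the strings with the delimiter strings `d k, d (k+1), …`. -/
def glue {α : Type*} (d : ℕ → List α) : ℕ → List (List α) → List α
  | _, [] => []
  | _, [w] => w
  | k, w :: ws => w ++ d k ++ glue d (k + 1) ws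

/-!
A 2-partition of a string starting with `⊡⊡` starts with the piece `[⊡]` or `[⊡⊡]`.
In an equality-free 2-partition of `w̄` the prefix `⊡⊡⊡⊡⊟` already uses both of these
pieces, so every gadget `dᵢ⊡⊡dᵢ` must be cut as `dᵢ⊡ | ⊡dᵢ`; the remaining pieces then
partition the `wᵢ` one by one. Conversely, cut the prefix as `⊡⊡ | ⊡ | ⊡⊟` and every gadget
as `dᵢ⊡ | ⊡dᵢ`: all the added pieces contain `⊡ ∉ Σ`, so they differ from the pieces of the
`wᵢ`, and they are pairwise distinct because the `dᵢ` are.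
-/

section

variable {α : Type*}

theorem isPartition_cons_iff {K : ℕ} {w p : List α} {P : List (List α)} :
    IsPartition K w (p :: P) ↔ p ≠ [] ∧ p.length ≤ K ∧ ∃ v, w = p ++ v ∧ IsPartition K v P := by
  simp only [IsPartition, List.flatten_cons, List.forall_mem_cons]
  constructor
  · rintro ⟨rfl, hp, hP⟩
    exact ⟨hp.1, hp.2, _, rfl, rfl, hP⟩
  · rintro ⟨hp, hK, v, rfl, rfl, hP⟩
    exact ⟨rfl, ⟨hp, hK⟩, hP⟩

theorem IsPartition.append {K : ℕ} {u v : List α} {P Q : List (List α)}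
    (hP : IsPartition K u P) (hQ : IsPartition K v Q) : IsPartition K (u ++ v) (P ++ Q) :=
  ⟨by rw [List.flatten_append, hP.1, hQ.1],
    fun p hp => (List.mem_append.1 hp).elim (hP.2 p) (hQ.2 p)⟩

theorem IsPartition.two_cons_cases {x : α} {t : List α} {P : List (List α)}
    (h : IsPartition 2 (x :: t) P) :
    (∃ Q, P = [x] :: Q ∧ IsPartition 2 t Q) ∨
      ∃ y t' Q, t = y :: t' ∧ P = [x, y] :: Q ∧ IsPartition 2 t' Q := by
  obtain _ | ⟨p, Q⟩ := P
  · simp [IsPartition] at h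
  obtain ⟨hp, hK, v, hv, hQ⟩ := isPartition_cons_iff.1 h
  rcases p with _ | ⟨a, _ | ⟨a', _ | ⟨a'', r⟩⟩⟩
  · exact absurd rfl hp
  · obtain ⟨rfl, rfl⟩ := List.cons.inj hv
    exact Or.inl ⟨Q, rfl, hQ⟩
  · simp only [List.cons_append, List.nil_append, List.cons.injEq] at hv
    obtain ⟨rfl, rfl⟩ := hv
    exact Or.inr ⟨a', v, Q, rfl, rfl, hQ⟩
  · simp at hK

theorem IsPartition.singleton_mem_or_pair_mem {b : α} {t : List α} {P : List (List α)}
    (h : IsPartition 2 (b :: b :: t) P) : [b] ∈ P ∨ [b, b] ∈ P := by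
  rcases h.two_cons_cases with ⟨_, rfl, -⟩ | ⟨_, _, _, ⟨⟩, rfl, -⟩ <;> simp

theorem IsPartition.two_append_cases {u v : List α} {P : List (List α)}
    (h : IsPartition 2 (u ++ v) P) :
    (∃ A B, P = A ++ B ∧ IsPartition 2 u A ∧ IsPartition 2 v B) ∨
      ∃ A B x y u' v', P = A ++ [x, y] :: B ∧ u = u' ++ [x] ∧ v = y :: v' ∧
        IsPartition 2 u' A ∧ IsPartition 2 v' B := by
  obtain ⟨hflat, hpieces⟩ := h
  have hsub : ∀ R, R ⊆ P → ∀ p ∈ R, p ≠ [] ∧ p.length ≤ 2 := fun R hR p hp => hpieces p (hR hp)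
  rcases List.flatten_eq_append_iff.1 hflat with
    ⟨A, B, rfl, rfl, rfl⟩ | ⟨A, bs, c, cs, B, rfl, rfl, rfl⟩
  · exact Or.inl ⟨A, B, rfl, ⟨rfl, hsub A (by simp)⟩, ⟨rfl, hsub B (by simp)⟩⟩
  have hlen := (hpieces (bs ++ c :: cs) (by simp)).2
  rcases bs with _ | ⟨x, _ | ⟨x', bs⟩⟩
  · refine Or.inl ⟨A, (c :: cs) :: B, by simp, ⟨by simp, hsub A (by simp)⟩,
      ⟨rfl, hsub _ fun _ hp => by simp [hp]⟩⟩
  · rcases cs with _ | ⟨c', cs⟩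
    · exact Or.inr ⟨A, B, x, c, A.flatten, B.flatten, rfl, rfl, rfl,
        ⟨rfl, hsub A (by simp)⟩, ⟨rfl, hsub B fun _ hp => by simp [hp]⟩⟩
    · simp at hlen
  · simp at hlen

theorem IsPartition.exists_split_at_gadget {b c c' : α} {w t : List α} {P : List (List α)}
    (h : IsPartition 2 (w ++ c :: b :: b :: c' :: t) P) (h₁ : [b] ∉ P) (h₂ : [b, b] ∉ P) :
    ∃ A B, P = A ++ [c, b] :: [b, c'] :: B ∧ IsPartition 2 w A ∧ IsPartition 2 t B := by
  have hbox : ∀ {s R}, IsPartition 2 (b :: b :: s) R → R ⊆ P → False := fun hR hRP =>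
    hR.singleton_mem_or_pair_mem.elim (fun h => h₁ (hRP h)) (fun h => h₂ (hRP h))
  rcases h.two_append_cases with ⟨A, B, rfl, hA, hB⟩ | ⟨_, _, _, _, _, _, rfl, -, ⟨⟩, -, hB⟩
  · rcases hB.two_cons_cases with ⟨B', rfl, hB'⟩ | ⟨_, _, B', ⟨⟩, rfl, hB'⟩
    · exact (hbox hB' fun _ hp => by simp [hp]).elim
    rcases hB'.two_cons_cases with ⟨_, rfl, -⟩ | ⟨_, _, B'', ⟨⟩, rfl, hB''⟩
    · simp at h₁
    · exact ⟨A, B'', rfl, hA, hB''⟩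
  · exact (hbox hB fun _ hp => by simp [hp]).elim

theorem exists_isMultiPartition_of_isPartition_glue {b : α} {d : ℕ → α} :
    ∀ {ws : List (List α)} {k : ℕ} {Q : List (List α)},
      IsPartition 2 (glue (fun j => [d j, b, b, d j]) k ws) Q → [b] ∉ Q → [b, b] ∉ Q →
      ∃ Ps, IsMultiPartition 2 ws Ps ∧ Ps.flatten.Sublist Q
  | [], _, _, _, _, _ => ⟨[], .nil, by simp⟩
  | [_], _, Q, hQ, _, _ => ⟨[Q], .cons hQ .nil, by simp⟩
  | w :: w' :: ws, k, Q, hQ, h₁, h₂ => by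
    have hQ' : IsPartition 2
        (w ++ d k :: b :: b :: d k :: glue (fun j => [d j, b, b, d j]) (k + 1) (w' :: ws)) Q := by
      simpa [glue] using hQ
    obtain ⟨A, B, rfl, hA, hB⟩ := hQ'.exists_split_at_gadget h₁ h₂
    obtain ⟨Ps, hPs, hsub⟩ := exists_isMultiPartition_of_isPartition_glue hB
      (fun h => h₁ (by simp [h])) (fun h => h₂ (by simp [h]))
    exact ⟨A :: Ps, .cons hA hPs, by simpa using ((hsub.cons _).cons _).append_left A⟩

theorem IsPartition.exists_isPartition_of_frame {b m : α} {G : List α} {P : List (List α)}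
    (h : IsPartition 2 (b :: b :: b :: b :: m :: G) P) (hfree : EqFree P) :
    ∃ Q, IsPartition 2 G Q ∧ EqFree Q ∧ [b] ∉ Q ∧ [b, b] ∉ Q := by
  suffices ∃ A Q, P = A ++ Q ∧ [b] ∈ A ∧ [b, b] ∈ A ∧ IsPartition 2 G Q by
    obtain ⟨A, Q, rfl, h₁, h₂, hQ⟩ := this
    obtain ⟨-, hQfree, hAQ⟩ := List.pairwise_append.1 hfree
    exact ⟨Q, hQ, hQfree, fun h => hAQ _ h₁ _ h rfl, fun h => hAQ _ h₂ _ h rfl⟩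
  rcases h.two_cons_cases with ⟨P₁, rfl, h₁⟩ | ⟨_, _, P₁, ⟨⟩, rfl, h₁⟩
  · rcases h₁.two_cons_cases with ⟨P₂, rfl, -⟩ | ⟨_, _, P₂, ⟨⟩, rfl, h₂⟩
    · simp [EqFree] at hfree
    rcases h₂.two_cons_cases with ⟨P₃, rfl, -⟩ | ⟨_, _, P₃, ⟨⟩, rfl, h₃⟩
    · simp [EqFree] at hfree
    exact ⟨[[b], [b, b], [b, m]], P₃, rfl, by simp, by simp, h₃⟩
  · rcases h₁.two_cons_cases with ⟨P₂, rfl, h₂⟩ | ⟨_, _, P₂, ⟨⟩, rfl, -⟩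
    · rcases h₂.two_cons_cases with ⟨P₃, rfl, -⟩ | ⟨_, _, P₃, ⟨⟩, rfl, h₃⟩
      · simp [EqFree] at hfree
      exact ⟨[[b, b], [b], [b, m]], P₃, rfl, by simp, by simp, h₃⟩
    · simp [EqFree] at hfree

theorem IsMultiPartition.isPartition_flatten {K : ℕ} {ws : List (List α)}
    {Ps : List (List (List α))} (h : IsMultiPartition K ws Ps) :
    IsPartition K ws.flatten Ps.flatten := by
  induction h with
  | nil => exact ⟨rfl, by simp⟩
  | cons hw _ ih => exact hw.append ih

theorem isPartition_glue {K : ℕ} {g : ℕ → List α} {e : ℕ → List (List α)}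
    (he : ∀ j, IsPartition K (g j) (e j)) :
    ∀ {ws : List (List α)} {Ps : List (List (List α))} {k : ℕ},
      IsMultiPartition K ws Ps → IsPartition K (glue g k ws) (glue e k Ps)
  | [], [], _, .nil => ⟨rfl, by simp [glue]⟩
  | [_], [_], _, .cons h .nil => h
  | _ :: _ :: _, _ :: _ :: _, k, .cons h (.cons h' hs) =>
    (h.append (he k)).append (isPartition_glue he (.cons h' hs))

theorem glue_perm (d : ℕ → List α) : ∀ (k : ℕ) (ws : List (List α)),
    (glue d k ws).Perm (ws.flatten ++ (List.range' k (ws.length - 1)).flatMap d)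
  | _, [] => by simp [glue]
  | _, [w] => by simp [glue]
  | k, w :: w' :: ws => by
    have := glue_perm d (k + 1) (w' :: ws)
    simp only [glue, List.flatten_cons, List.length_cons, Nat.add_sub_cancel, List.range'_succ,
      List.flatMap_cons, List.append_assoc] at this ⊢
    refine ((this.append_left (d k)).trans ?_).append_left w
    simpa only [List.append_assoc] using List.perm_append_comm_assoc (d k) (w' ++ ws.flatten) _

theorem nodup_frame_append_flatMap {b m : α} {d : ℕ → α} {s : List ℕ} (hs : s.Nodup)
    (hbm : b ≠ m) (hd : ∀ i ∈ s, d i ≠ b ∧ d i ≠ m) (hinj : Set.InjOn d {i | i ∈ s}) :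
    ([[b, b], [b], [b, m]] ++ s.flatMap fun j => [[d j, b], [b, d j]]).Nodup := by
  refine List.nodup_append.2 ⟨by simp [hbm], List.nodup_flatMap.2 ⟨?_, ?_⟩, ?_⟩
  · intro i hi
    simp [(hd i hi).1]
  · refine hs.pairwise_of_forall_ne fun i hi j hj hij => ?_
    have hdji : d j ≠ d i := fun h => hij (hinj hi hj h.symm)
    simp [Function.onFun, hdji, (hd j hj).1, Ne.symm (hd i hi).1]
  · intro p hp q hq
    simp only [List.mem_flatMap] at hq
    obtain ⟨j, hj, hq⟩ := hq
    obtain ⟨hjb, hjm⟩ := hd j hj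
    simp only [List.mem_cons, List.not_mem_nil, or_false] at hp hq
    rcases hp with rfl | rfl | rfl <;> rcases hq with rfl | rfl <;> simp [hjb.symm, hjm.symm]

theorem eqFree_frame_append_glue {S : Set α} {b m : α} {d : ℕ → α} {k : ℕ}
    {Ps : List (List (List α))} (hS : ∀ p ∈ Ps.flatten, ∀ x ∈ p, x ∈ S) (hb : b ∉ S)
    (hbm : b ≠ m) (hd : ∀ i ∈ List.range' k (Ps.length - 1), d i ≠ b ∧ d i ≠ m)
    (hinj : Set.InjOn d {i | i ∈ List.range' k (Ps.length - 1)}) (hfree : EqFree Ps.flatten) :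
    EqFree ([[b, b], [b], [b, m]] ++ glue (fun j => [[d j, b], [b, d j]]) k Ps) := by
  have hframe := nodup_frame_append_flatMap List.nodup_range' hbm hd hinj
  have hmem : ∀ q ∈ [[b, b], [b], [b, m]] ++
      (List.range' k (Ps.length - 1)).flatMap fun j => [[d j, b], [b, d j]], b ∈ q := by
    intro q hq
    simp only [List.mem_append, List.mem_cons, List.not_mem_nil, or_false,
      List.mem_flatMap] at hq
    rcases hq with (rfl | rfl | rfl) | ⟨_, -, rfl | rfl⟩ <;> simp
  refine (((glue_perm _ k Ps).append_left _).trans (List.perm_append_comm_assoc _ _ _)).nodup_iff.2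
    (List.nodup_append.2 ⟨hfree, hframe, ?_⟩)
  rintro p hp q hq rfl
  exact hb (hS p hp b (hmem p hq))

end

theorem stmt_3_general {γ : Type*} (S : Set γ) (box minus : γ) (d : ℕ → γ)
    (ws : List (List γ))
    (hsub : ∀ w ∈ ws, ∀ x ∈ w, x ∈ S)
    (hbox : box ∉ S) (hbm : box ≠ minus)
    (hd : ∀ i, 1 ≤ i → i ≤ ws.length - 1 → d i ∉ S ∧ d i ≠ box ∧ d i ≠ minus)
    (hinj : ∀ i j, 1 ≤ i → i ≤ ws.length - 1 → 1 ≤ j → j ≤ ws.length - 1 →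
      d i = d j → i = j) :
    (∃ P, IsPartition 2
        ([box, box, box, box, minus] ++ glue (fun k => [d k, box, box, d k]) 1 ws) P ∧
      EqFree P) ↔
    (∃ Ps, IsMultiPartition 2 ws Ps ∧ EqFree Ps.flatten) := by
  constructor
  · rintro ⟨P, hP, hfree⟩
    obtain ⟨Q, hQ, hQfree, h₁, h₂⟩ := IsPartition.exists_isPartition_of_frame hP hfree
    obtain ⟨Ps, hPs, hsubl⟩ := exists_isMultiPartition_of_isPartition_glue hQ h₁ h₂
    exact ⟨Ps, hPs, hQfree.sublist hsubl⟩
  · rintro ⟨Ps, hPs, hfree⟩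
    have hrange : ∀ {i}, i ∈ List.range' 1 (Ps.length - 1) → 1 ≤ i ∧ i ≤ ws.length - 1 := by
      intro i hi
      rw [List.mem_range'_1] at hi
      have := hPs.length_eq
      omega
    have hS : ∀ p ∈ Ps.flatten, ∀ x ∈ p, x ∈ S := fun p hp x hx => by
      have hx : x ∈ ws.flatten := hPs.isPartition_flatten.1 ▸ List.mem_flatten_of_mem hp hx
      obtain ⟨w, hw, hxw⟩ := List.mem_flatten.1 hx
      exact hsub w hw x hxw
    have hglue := isPartition_glue (e := fun j => [[d j, box], [box, d j]]) (k := 1)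
      (fun j => ⟨rfl, by simp⟩) hPs
    refine ⟨_, IsPartition.append ⟨rfl, by simp⟩ hglue,
      eqFree_frame_append_glue hS hbox hbm (fun i hi => ?_) (fun i hi j hj => ?_) hfree⟩
    · exact (hd i (hrange hi).1 (hrange hi).2).2
    · exact hinj i j (hrange hi).1 (hrange hi).2 (hrange hj).1 (hrange hj).2

/-- `w̄ = ⊡⊡⊡⊡⊟ w₁ d₁⊡⊡d₁ w₂ d₂⊡⊡d₂ ⋯ d_{ℓ−1}⊡⊡d_{ℓ−1} w_ℓ` has an
equality-free 2-partition iff the multiset `{w₁, …, w_ℓ}` has one.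
Here `S` is the set of letters of the alphabet `Σ` over which the `wᵢ` are
strings, and `box = ⊡`, `minus = ⊟`, `d 1, …, d (ℓ-1)` are pairwise distinct
letters not in `S`. -/
theorem stmt_3 {γ : Type*} (S : Set γ) (box minus : γ) (d : ℕ → γ)
    (ws : List (List γ)) (hws : ws ≠ []) (hne : ∀ w ∈ ws, w ≠ [])
    (hsub : ∀ w ∈ ws, ∀ x ∈ w, x ∈ S)
    (hbox : box ∉ S) (hminus : minus ∉ S) (hbm : box ≠ minus)
    (hd : ∀ i, 1 ≤ i → i ≤ ws.length - 1 → d i ∉ S ∧ d i ≠ box ∧ d i ≠ minus)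
    (hinj : ∀ i j, 1 ≤ i → i ≤ ws.length - 1 → 1 ≤ j → j ≤ ws.length - 1 →
      d i = d j → i = j) :
    (∃ P, IsPartition 2
        ([box, box, box, box, minus] ++ glue (fun k => [d k, box, box, d k]) 1 ws) P ∧
      EqFree P) ↔
    (∃ Ps, IsMultiPartition 2 ws Ps ∧ EqFree Ps.flatten) :=
  stmt_3_general S box minus d ws hsub hbox hbm hd hinj
end

section
/- Let a and z be distinct letters and let f = aza. Let 𝒲 be a finite multiset of strings containing f such that every letter occurring in some string of 𝒲 occurs at least twice in total, counting all occurrences across all strings of 𝒲. Then for every K ≥ 3, in any factor-free K-partition of 𝒲, the string f is selected as a whole (its partition has no non-trivial cut point), and consequently no selected string occurring in the partition of any other string of 𝒲 is a factor of f. -/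
/-- A partition is factor-free if no selected string at one occurrence is a
factor (contiguous substring) of a selected string at another occurrence. -/
def FactorFree {α : Type*} (P : List (List α)) : Prop :=
  P.Pairwise fun a b => ¬ a <:+: b ∧ ¬ b <:+: a

/-!
A cut of `aza` makes its first block `a` or its last block `a`, since two blocks of length at
least two do not fit into three letters. That block `a` is then a factor of the block at the other
end, which also contains the letter `a`, against factor-freeness. Hence `aza` forms a single block,
and factor-freeness of the whole partition keeps every other block from being a factor of it.
-/

namespace FactorFree

variable {α : Type*}

theorem sublist {P Q : List (List α)} (hQ : FactorFree Q) (hPQ : P.Sublist Q) : FactorFree P :=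
  List.Pairwise.sublist hPQ hQ

theorem not_infix_of_mem {A B : List (List α)} {w s : List α} (h : FactorFree (A ++ w :: B))
    (hs : s ∈ A ++ B) : ¬ s <:+: w ∧ ¬ w <:+: s := by
  rw [FactorFree, List.pairwise_append, List.pairwise_cons] at h
  rcases List.mem_append.1 hs with hs | hs
  · exact h.2.2 s hs w List.mem_cons_self
  · exact (h.2.1.1 s hs).symm

theorem ne_nil_of_cons_of_concat {a : α} {p q : List α} {R : List (List α)}
    (h : FactorFree ((a :: p) :: (R ++ [q ++ [a]]))) : p ≠ [] ∧ q ≠ [] := by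
  constructor
  · rintro rfl
    refine (h.not_infix_of_mem (A := []) (s := q ++ [a]) (by simp)).2 ?_
    exact (List.singleton_infix_iff _ _).2 (by simp)
  · rintro rfl
    rw [← List.cons_append] at h
    refine (h.not_infix_of_mem (B := []) (List.mem_append_left [] List.mem_cons_self)).2 ?_
    exact (List.singleton_infix_iff _ _).2 (by simp)

theorem eq_singleton_of_flatten_eq {a : α} {u : List α} (hu : u.length ≤ 1) {P : List (List α)}
    (hflat : P.flatten = a :: (u ++ [a])) (hne : ∀ p ∈ P, p ≠ []) (hP : FactorFree P) :
    P = [a :: (u ++ [a])] := by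
  rcases P with _ | ⟨p, P'⟩
  · simp at hflat
  rcases List.eq_nil_or_concat P' with rfl | ⟨R, q, rfl⟩
  · simpa using hflat
  exfalso
  obtain ⟨x, p, rfl⟩ := List.exists_cons_of_ne_nil (hne _ List.mem_cons_self)
  obtain ⟨q, y, rfl⟩ := (List.eq_nil_or_concat q).resolve_left (hne _ (by simp))
  simp only [List.concat_eq_append] at hflat hP
  have hx : x = a := by simpa using congrArg List.head? hflat
  have hy : y = a := by simpa [List.getLast?_cons] using congrArg List.getLast? hflat
  subst hx hy
  obtain ⟨hp, hq⟩ := hP.ne_nil_of_cons_of_concat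
  have hlen := congrArg List.length hflat
  simp only [List.flatten_cons, List.flatten_append, List.flatten_nil, List.length_cons,
    List.length_append, List.length_nil] at hlen
  have := List.length_pos_of_ne_nil hp
  have := List.length_pos_of_ne_nil hq
  omega

end FactorFree

theorem IsMultiPartition.exists_eq_append_cons {α : Type*} {K : ℕ} {l₁ l₂ : List (List α)}
    {w : List α} {Ps : List (List (List α))} (h : IsMultiPartition K (l₁ ++ w :: l₂) Ps) :
    ∃ q₁ P q₂, Ps = q₁ ++ P :: q₂ ∧ q₁.length = l₁.length ∧ IsPartition K w P := by
  have hdrop := List.forall₂_drop l₁.length h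
  rw [List.drop_left] at hdrop
  obtain ⟨P, q₂, hP, -, hq₂⟩ := List.forall₂_cons_left_iff.mp hdrop
  refine ⟨Ps.take l₁.length, P, q₂, by rw [← hq₂, List.take_append_drop], ?_, hP⟩
  simpa using (List.forall₂_take l₁.length h).length_eq.symm

theorem stmt_7_general {α : Type*} (a z : α)
    (l₁ l₂ : List (List α))
    (K : ℕ) :
    ∀ Ps, IsMultiPartition K (l₁ ++ [a, z, a] :: l₂) Ps → FactorFree Ps.flatten →
      ∃ q₁ q₂, Ps = q₁ ++ [[a, z, a]] :: q₂ ∧ q₁.length = l₁.length ∧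
        ∀ s ∈ (q₁ ++ q₂).flatten, ¬ s <:+: [a, z, a] := by
  intro Ps hmp hff
  obtain ⟨q₁, P, q₂, rfl, hlen, hflat, hblocks⟩ := hmp.exists_eq_append_cons
  have hsub : P.Sublist (q₁ ++ P :: q₂).flatten := by simp
  have hP : P = [[a, z, a]] :=
    FactorFree.eq_singleton_of_flatten_eq (u := [z]) le_rfl hflat
      (fun p hp => (hblocks p hp).1) (hff.sublist hsub)
  subst hP
  refine ⟨q₁, q₂, rfl, hlen, fun s hs => ?_⟩
  have hff' : FactorFree (q₁.flatten ++ [a, z, a] :: q₂.flatten) := by simpa using hff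
  exact (hff'.not_infix_of_mem (by simpa using hs)).1

/-- Let `f = aza` with `a ≠ z`, and let the multiset `ws = l₁ ++ f :: l₂`
contain `f`, with every occurring letter occurring at least twice in total.
Then for every `K ≥ 3`, in any factor-free `K`-partition of `ws` the string
`f` is selected as a whole (its partition is the single block `[f]`), and no
selected string in the partition of any other string of `ws` is a factor
of `f`. -/
theorem stmt_7 {α : Type*} [DecidableEq α] (a z : α) (haz : a ≠ z)
    (l₁ l₂ : List (List α))
    (hocc : ∀ x : α, (∃ w ∈ l₁ ++ [a, z, a] :: l₂, x ∈ w) →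
      2 ≤ (l₁ ++ [a, z, a] :: l₂).flatten.count x)
    (K : ℕ) (hK : 3 ≤ K) :
    ∀ Ps, IsMultiPartition K (l₁ ++ [a, z, a] :: l₂) Ps → FactorFree Ps.flatten →
      ∃ q₁ q₂, Ps = q₁ ++ [[a, z, a]] :: q₂ ∧ q₁.length = l₁.length ∧
        ∀ s ∈ (q₁ ++ q₂).flatten, ¬ s <:+: [a, z, a] :=
  stmt_7_general a z l₁ l₂ K
end

section
/- Let a, b, c and z be pairwise distinct letters. In any factor-free 3-partition of the string aazbbzcc in which no selected string has length 1, at least one of the strings aa, bb, cc is a selected string. Similarly, in any factor-free 3-partition of the string aazbb in which no selected string has length 1, at least one of aa, bb is a selected string. -/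
/-!
Only lengths matter: with every selected string of length 2 or 3, the first selected string of
`x y w` is either `x y` or `x y t` with `w = t w'`, and the rest is a partition of `w'`.
Reading `aazbbzcc` from the left, either `aa` or `aaz` is selected, then `bb` or `bbz`,
and after `aaz`, `bbz` only `cc` is left; likewise for `aazbb`.
-/

namespace IsPartition

variable {α : Type*}

theorem length_eq_two_or_three {w : List α} {P : List (List α)} (hP : IsPartition 3 w P)
    (h1 : ∀ s ∈ P, s.length ≠ 1) : ∀ p ∈ P, p.length = 2 ∨ p.length = 3 := by
  intro p hp
  have hne : p.length ≠ 0 := List.length_pos_iff.mpr (hP.2 p hp).1 |>.ne'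
  have := (hP.2 p hp).2
  have := h1 p hp
  omega

end IsPartition

section LengthTwoOrThree

variable {α : Type*} {P : List (List α)}

theorem pair_mem_or_eq_triple_cons (hP : ∀ p ∈ P, p.length = 2 ∨ p.length = 3)
    {x y : α} {w : List α} (hw : P.flatten = x :: y :: w) :
    [x, y] ∈ P ∨ ∃ t w' Q, w = t :: w' ∧ P = [x, y, t] :: Q ∧ Q.flatten = w' := by
  rcases P with _ | ⟨p, Q⟩
  · simp at hw
  rcases hP p List.mem_cons_self with h2 | h3
  · obtain ⟨u, v, rfl⟩ := List.length_eq_two.mp h2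
    simp only [List.flatten_cons, List.cons_append, List.nil_append, List.cons.injEq] at hw
    obtain ⟨rfl, rfl, -⟩ := hw
    exact Or.inl List.mem_cons_self
  · obtain ⟨u, v, t, rfl⟩ := List.length_eq_three.mp h3
    simp only [List.flatten_cons, List.cons_append, List.nil_append, List.cons.injEq] at hw
    obtain ⟨rfl, rfl, rfl⟩ := hw
    exact Or.inr ⟨t, Q.flatten, Q, rfl, rfl, rfl⟩

theorem pair_mem_of_flatten_eq_pair (hP : ∀ p ∈ P, p.length = 2 ∨ p.length = 3)
    {x y : α} (hw : P.flatten = [x, y]) : [x, y] ∈ P := by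
  rcases pair_mem_or_eq_triple_cons hP hw with h | ⟨_, _, _, h, -⟩
  · exact h
  · cases h

end LengthTwoOrThree

theorem stmt_8_general {α : Type*} (a b c z : α) :
    (∀ P : List (List α), IsPartition 3 [a, a, z, b, b, z, c, c] P →
      FactorFree P → (∀ s ∈ P, s.length ≠ 1) →
      ([a, a] ∈ P ∨ [b, b] ∈ P ∨ [c, c] ∈ P)) ∧
    (∀ P : List (List α), IsPartition 3 [a, a, z, b, b] P →
      FactorFree P → (∀ s ∈ P, s.length ≠ 1) →
      ([a, a] ∈ P ∨ [b, b] ∈ P)) := by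
  constructor
  · intro P hP _ h1
    have hlen := hP.length_eq_two_or_three h1
    rcases pair_mem_or_eq_triple_cons hlen hP.1 with haa | ⟨_, _, Q, ⟨⟩, rfl, hQ⟩
    · exact Or.inl haa
    have hQlen := (List.forall_mem_cons.mp hlen).2
    rcases pair_mem_or_eq_triple_cons hQlen hQ with hbb | ⟨_, _, R, ⟨⟩, rfl, hR⟩
    · exact Or.inr (Or.inl (List.mem_cons_of_mem _ hbb))
    have hcc := pair_mem_of_flatten_eq_pair (List.forall_mem_cons.mp hQlen).2 hR
    exact Or.inr (Or.inr (List.mem_cons_of_mem _ (List.mem_cons_of_mem _ hcc)))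
  · intro P hP _ h1
    have hlen := hP.length_eq_two_or_three h1
    rcases pair_mem_or_eq_triple_cons hlen hP.1 with haa | ⟨_, _, Q, ⟨⟩, rfl, hQ⟩
    · exact Or.inl haa
    have hbb := pair_mem_of_flatten_eq_pair (List.forall_mem_cons.mp hlen).2 hQ
    exact Or.inr (List.mem_cons_of_mem _ hbb)

theorem stmt_8 {α : Type*} (a b c z : α)
    (hab : a ≠ b) (hac : a ≠ c) (haz : a ≠ z)
    (hbc : b ≠ c) (hbz : b ≠ z) (hcz : c ≠ z) :
    (∀ P : List (List α), IsPartition 3 [a, a, z, b, b, z, c, c] P →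
      FactorFree P → (∀ s ∈ P, s.length ≠ 1) →
      ([a, a] ∈ P ∨ [b, b] ∈ P ∨ [c, c] ∈ P)) ∧
    (∀ P : List (List α), IsPartition 3 [a, a, z, b, b] P →
      FactorFree P → (∀ s ∈ P, s.length ≠ 1) →
      ([a, a] ∈ P ∨ [b, b] ∈ P)) :=
  stmt_8_general a b c z
end

section
/- Let K ≥ 2, let x be a letter, and let α and β be letters different from x (possibly α = β). If a string w contains the factor α x^{3K−2} β at some position, then in any factor-free K-partition of w, the part of the partition covering this occurrence consists of exactly three consecutive selected strings, namely α x^{K−1}, x^K and x^{K−1}β; in particular, the strings α x^{K−1}, x^K and x^{K−1}β are selected. -/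
namespace List

variable {α : Type*}

theorem exists_of_flatten_eq_append_cons {P : List (List α)} {l₁ l₂ : List α} {c : α}
    (h : P.flatten = l₁ ++ c :: l₂) :
    ∃ P₁ s₁ s₂ P₂, P = P₁ ++ (s₁ ++ c :: s₂) :: P₂ ∧
      P₁.flatten ++ s₁ = l₁ ∧ s₂ ++ P₂.flatten = l₂ := by
  rcases flatten_eq_append_iff.1 h with ⟨P₁, R, rfl, rfl, hR⟩ | ⟨P₁, s₁, c', s₂, P₂, rfl, rfl, hc⟩
  · obtain ⟨E, s₂, P₂, rfl, hE, rfl⟩ := flatten_eq_cons_iff.1 hR.symm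
    have hE : E.flatten = [] := flatten_eq_nil_iff.2 hE
    exact ⟨P₁ ++ E, [], s₂, P₂, by simp, by simp [hE], rfl⟩
  · obtain ⟨rfl, rfl⟩ := cons_eq_cons.1 hc
    exact ⟨P₁, s₁, s₂, P₂, rfl, rfl, rfl⟩

theorem eq_replicate_and_eq_of_append_eq_replicate_append {s t l : List α} {x : α} {n : ℕ}
    (h : s ++ t = replicate n x ++ l) (hs : s.length ≤ n) :
    s = replicate s.length x ∧ t = replicate (n - s.length) x ++ l := by
  obtain ⟨k, rfl⟩ := Nat.exists_eq_add_of_le hs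
  rw [← replicate_append_replicate, append_assoc] at h
  simpa using append_inj h (by simp)

end List

theorem FactorFree.length_le_one_of_flatten_eq_replicate {α : Type*} {Q : List (List α)}
    {x : α} {n : ℕ} (hQ : FactorFree Q) (hx : Q.flatten = List.replicate n x) :
    Q.length ≤ 1 := by
  have hpow : ∀ q ∈ Q, q = List.replicate q.length x := fun q hq =>
    (List.infix_replicate_iff.1 (hx ▸ List.infix_of_mem_flatten hq)).2
  rcases Q with _ | ⟨p, _ | ⟨q, Q⟩⟩
  · simp
  · simp
  · have hpq := (List.pairwise_cons.1 hQ).1 q (by simp)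
    rw [hpow p (by simp), hpow q (by simp)] at hpq
    rcases le_total p.length q.length with h | h
    · exact absurd (List.infix_replicate_iff.2 (by simpa using h)) hpq.1
    · exact absurd (List.infix_replicate_iff.2 (by simpa using h)) hpq.2

theorem stmt_10_general {α : Type*} (K : ℕ) (x a b : α) (u v : List α) :
    ∀ P, IsPartition K (u ++ [a] ++ List.replicate (3 * K - 2) x ++ [b] ++ v) P →
      FactorFree P →
      ∃ P₁ P₂, P = P₁ ++ [[a] ++ List.replicate (K - 1) x,
                          List.replicate K x,
                          List.replicate (K - 1) x ++ [b]] ++ P₂ ∧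
        P₁.flatten = u := by
  rintro P ⟨hflat, hparts⟩ hFF
  obtain ⟨P₁, s₁, s₂, R, rfl, hu, hR⟩ :=
    List.exists_of_flatten_eq_append_cons (l₂ := List.replicate (3 * K - 2) x ++ b :: v)
      (by simpa using hflat)
  have ha := (hparts (s₁ ++ a :: s₂) (by simp)).2
  simp only [List.length_append, List.length_cons] at ha
  obtain ⟨hs₂, hRflat⟩ := List.eq_replicate_and_eq_of_append_eq_replicate_append hR (by omega)
  obtain ⟨Q, t₁, t₂, P₂, rfl, hQt, rfl⟩ := List.exists_of_flatten_eq_append_cons hRflat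
  have hb := (hparts (t₁ ++ b :: t₂) (by simp)).2
  simp only [List.length_append, List.length_cons] at hb
  obtain ⟨hlen, hQ, ht₁⟩ := List.append_eq_replicate_iff.1 hQt
  have hQ₁ : Q.length ≤ 1 :=
    FactorFree.length_le_one_of_flatten_eq_replicate (hFF.sublist <|
      (Q.sublist_append_left _).trans <| (List.sublist_cons_self _ _).trans <|
        List.sublist_append_right _ _) hQ
  rcases Q with _ | ⟨r, _ | ⟨_, _⟩⟩
  · simp only [List.flatten_nil, List.length_nil] at hlen
    omega
  · have hr : r.length ≤ K := (hparts r (by simp)).2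
    simp only [List.flatten_cons, List.flatten_nil, List.append_nil] at hlen hQ
    obtain rfl : s₁ = [] := List.eq_nil_of_length_eq_zero (by omega)
    obtain rfl : t₂ = [] := List.eq_nil_of_length_eq_zero (by omega)
    refine ⟨P₁, P₂, ?_, by simpa using hu⟩
    rw [hs₂, hQ, ht₁, show s₂.length = K - 1 by omega, show r.length = K by omega,
      show t₁.length = K - 1 by omega]
    simp
  · simp at hQ₁

/-- If `w = u ++ a x^{3K−2} b ++ v` (with `a, b ≠ x`, `K ≥ 2`), then in any
factor-free `K`-partition of `w` the part covering the occurrence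
`a x^{3K−2} b` consists of exactly the three consecutive selected strings
`a x^{K−1}`, `x^K` and `x^{K−1} b`; in particular these strings are selected. -/
theorem stmt_10 {α : Type*} (K : ℕ) (hK : 2 ≤ K) (x a b : α)
    (hax : a ≠ x) (hbx : b ≠ x) (u v : List α) :
    ∀ P, IsPartition K (u ++ [a] ++ List.replicate (3 * K - 2) x ++ [b] ++ v) P →
      FactorFree P →
      ∃ P₁ P₂, P = P₁ ++ [[a] ++ List.replicate (K - 1) x,
                          List.replicate K x,
                          List.replicate (K - 1) x ++ [b]] ++ P₂ ∧
        P₁.flatten = u :=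
  stmt_10_general K x a b u v
end

section
/- Let x₁, p, r, x₂ be pairwise distinct letters and let 𝒲 be a finite multiset of strings containing the string x₁ p r x₂. Then in any prefix-free 2-partition of 𝒲, at most one of the length-1 strings p and r is a selected string in the partitions of the strings of 𝒲 other than this occurrence of x₁ p r x₂. -/
/-- A partition is prefix-free if no selected string at one occurrence is a
prefix of a selected string at another occurrence. -/
def PrefixFree {α : Type*} (P : List (List α)) : Prop :=
  P.Pairwise fun a b => ¬ a <+: b ∧ ¬ b <+: a

theorem List.Forall₂.rel_of_append_cons {β γ : Type*} {R : β → γ → Prop}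
    {l₁ l₂ : List β} {q₁ q₂ : List γ} {a : β} {b : γ}
    (h : Forall₂ R (l₁ ++ a :: l₂) (q₁ ++ b :: q₂)) (hlen : q₁.length = l₁.length) : R a b := by
  simpa [getElem_append_right, hlen] using h.get (i := l₁.length) (by simp) (by simp [hlen])

theorem PrefixFree.not_isPrefix {α : Type*} {q₁ q₂ : List (List (List α))}
    {P : List (List α)} {s t : List α}
    (h : PrefixFree (q₁ ++ P :: q₂).flatten) (hs : s ∈ P) (ht : t ∈ (q₁ ++ q₂).flatten) :
    ¬ t <+: s := by
  have hperm : (q₁ ++ P :: q₂).flatten.Perm (P ++ (q₁ ++ q₂).flatten) := by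
    simpa using List.perm_middle.flatten
  exact ((List.pairwise_append.1 (hperm.pairwise h And.symm)).2.2 s hs t ht).2

theorem IsPartition.exists_isPrefix_of_cons {α : Type*} {K : ℕ} {w u v : List α} {x : α}
    {P : List (List α)} (hP : IsPartition K w (u :: P)) (hw : w = u ++ x :: v) :
    ∃ s ∈ P, [x] <+: s := by
  obtain ⟨hflat, hpieces⟩ := hP
  rcases P with _ | ⟨s, P⟩
  · simp_all
  · obtain ⟨y, t, rfl⟩ := List.exists_cons_of_ne_nil (hpieces s (by simp)).1
    simp only [List.flatten_cons, hw, List.append_cancel_left_eq, List.cons_append,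
      List.cons.injEq] at hflat
    exact ⟨y :: t, by simp, by simp [hflat.1]⟩

theorem IsPartition.exists_isPrefix_of_two {α : Type*} {a b c : α} {w : List α}
    {P : List (List α)} (hP : IsPartition 2 (a :: b :: c :: w) P) :
    ∃ s ∈ P, [b] <+: s ∨ [c] <+: s := by
  rcases P with _ | ⟨s₁, P⟩
  · simpa [IsPartition] using hP.1
  obtain ⟨hne, hle⟩ := hP.2 s₁ (by simp)
  have hflat := hP.1
  match s₁, hne, hle with
  | [_], _, _ =>
    obtain ⟨s, hs, h⟩ := hP.exists_isPrefix_of_cons (x := b) (v := c :: w) (by simp_all)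
    exact ⟨s, by simp [hs], .inl h⟩
  | [_, _], _, _ =>
    obtain ⟨s, hs, h⟩ := hP.exists_isPrefix_of_cons (x := c) (v := w) (by simp_all)
    exact ⟨s, by simp [hs], .inr h⟩

theorem stmt_17_general {α : Type*} (x₁ p r x₂ : α)
    (l₁ l₂ : List (List α)) :
    ∀ Ps q₁ Pf q₂, IsMultiPartition 2 (l₁ ++ [x₁, p, r, x₂] :: l₂) Ps →
      PrefixFree Ps.flatten → Ps = q₁ ++ Pf :: q₂ → q₁.length = l₁.length →
      ¬([p] ∈ (q₁ ++ q₂).flatten ∧ [r] ∈ (q₁ ++ q₂).flatten) := by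
  rintro Ps q₁ Pf q₂ hM hPF rfl hlen ⟨hp, hr⟩
  obtain ⟨s, hs, hps | hrs⟩ := (hM.rel_of_append_cons hlen).exists_isPrefix_of_two
  · exact hPF.not_isPrefix hs hp hps
  · exact hPF.not_isPrefix hs hr hrs

/-- Let `x₁, p, r, x₂` be pairwise distinct letters and let the multiset
`ws = l₁ ++ [x₁, p, r, x₂] :: l₂` contain the string `x₁ p r x₂`.  In any
prefix-free 2-partition of `ws`, at most one of the length-1 strings `[p]`
and `[r]` is selected in the partitions of the strings of `ws` other than this
occurrence of `x₁ p r x₂`. -/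
theorem stmt_17 {α : Type*} (x₁ p r x₂ : α)
    (h1 : x₁ ≠ p) (h2 : x₁ ≠ r) (h3 : x₁ ≠ x₂)
    (h4 : p ≠ r) (h5 : p ≠ x₂) (h6 : r ≠ x₂)
    (l₁ l₂ : List (List α)) :
    ∀ Ps q₁ Pf q₂, IsMultiPartition 2 (l₁ ++ [x₁, p, r, x₂] :: l₂) Ps →
      PrefixFree Ps.flatten → Ps = q₁ ++ Pf :: q₂ → q₁.length = l₁.length →
      ¬([p] ∈ (q₁ ++ q₂).flatten ∧ [r] ∈ (q₁ ++ q₂).flatten) :=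
  stmt_17_general x₁ p r x₂ l₁ l₂
end

section
/- Let φ be a 3SAT(3) instance with clauses c₁,…,c_m and variables x₁,…,x_n. Let Σ consist of pairwise distinct letters x̂_v^1, x̂_v^2, x̂_v^3, x̂_v^4 (four per variable x_v), ĉ_i^j (one per literal occurrence c_i^j), and one further letter $. Let 𝒲 be the multiset consisting of: the clause string ĉ_i^1 $ ĉ_i^2 for each two-literal clause c_i and ĉ_i^1 $ ĉ_i^2 $ ĉ_i^3 for each three-literal clause c_i; for each variable x_v, where c_i^p and c_j^q are its two positive occurrences and c_k^r its negated occurrence, the two enforcer strings x̂_v^1 ĉ_i^p ĉ_k^r x̂_v^2 and x̂_v^3 ĉ_j^q ĉ_k^r x̂_v^4; and the forbidden string $$. Then φ is satisfiable if and only if 𝒲 has a prefix-free 2-partition. -/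
/-- The alphabet: four letters `var v 0, …, var v 3` per variable
(`x̂_v^1, …, x̂_v^4`), one letter `lit i j` per literal occurrence, and one
further letter `dollar` (`$`). -/
inductive PLetter (n m : ℕ) where
  | var : Fin n → Fin 4 → PLetter n m
  | lit : Fin m → ℕ → PLetter n m
  | dollar : PLetter n m

namespace PrefixFreePartition

section General

variable {α : Type*}

def Incomparable (a b : List α) : Prop := ¬ a <+: b ∧ ¬ b <+: a

theorem prefixFree_append {A B : List (List α)} :
    PrefixFree (A ++ B) ↔ PrefixFree A ∧ PrefixFree B ∧ ∀ a ∈ A, ∀ b ∈ B, Incomparable a b :=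
  List.pairwise_append

theorem mem_flatten_ofFn {β : Type*} {k : ℕ} {f : Fin k → List β} {b : β} :
    b ∈ (List.ofFn f).flatten ↔ ∃ i, b ∈ f i := by
  simp

theorem prefixFree_flatten_ofFn {k : ℕ} {f : Fin k → List (List α)} (h : ∀ i, PrefixFree (f i))
    (h' : ∀ i j, i ≠ j → ∀ a ∈ f i, ∀ b ∈ f j, Incomparable a b) :
    PrefixFree (List.ofFn f).flatten := by
  refine List.pairwise_flatten.2 ⟨?_, List.pairwise_ofFn.2 fun i j hij => h' i j hij.ne⟩
  intro l hl
  obtain ⟨i, rfl⟩ := List.mem_ofFn.1 hl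
  exact h i

theorem isPartition_cons_iff {K : ℕ} {w p : List α} {P : List (List α)} :
    IsPartition K w (p :: P) ↔
      p ≠ [] ∧ p.length ≤ K ∧ ∃ w', w = p ++ w' ∧ IsPartition K w' P := by
  simp only [IsPartition, List.flatten_cons, List.mem_cons, forall_eq_or_imp]
  constructor
  · rintro ⟨rfl, ⟨hp, hpK⟩, hP⟩
    exact ⟨hp, hpK, _, rfl, rfl, hP⟩
  · rintro ⟨hp, hpK, w', rfl, rfl, hP⟩
    exact ⟨rfl, ⟨hp, hpK⟩, hP⟩

theorem isPartition_two_nil_iff {P : List (List α)} : IsPartition 2 [] P ↔ P = [] := by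
  refine ⟨fun ⟨hP, hne⟩ => ?_, fun h => by simp [h, IsPartition]⟩
  cases P with
  | nil => rfl
  | cons p P => exact absurd (List.flatten_eq_nil_iff.1 hP p (by simp)) (hne p (by simp)).1

theorem isPartition_two_singleton_iff {a : α} {P : List (List α)} :
    IsPartition 2 [a] P ↔ P = [[a]] := by
  cases P with
  | nil => simp [IsPartition]
  | cons p P =>
    rw [isPartition_cons_iff]
    constructor
    · rintro ⟨hp, -, w', hw, hP⟩
      obtain ⟨rfl, rfl⟩ : p = [a] ∧ w' = [] := by
        rcases p with _ | ⟨x, _ | ⟨y, p⟩⟩ <;> simp_all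
      simp [isPartition_two_nil_iff.1 hP]
    · rintro ⟨rfl, rfl⟩
      exact ⟨by simp, by simp, [], rfl, isPartition_two_nil_iff.2 rfl⟩

theorem isPartition_two_cons_cons_iff {a b : α} {w : List α} {P : List (List α)} :
    IsPartition 2 (a :: b :: w) P ↔
      (∃ P', P = [a] :: P' ∧ IsPartition 2 (b :: w) P') ∨
        ∃ P', P = [a, b] :: P' ∧ IsPartition 2 w P' := by
  cases P with
  | nil => simp [IsPartition]
  | cons p P =>
    rw [isPartition_cons_iff]
    constructor
    · rintro ⟨hp, hp2, w', hw, hP⟩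
      rcases p with _ | ⟨x, _ | ⟨y, _ | ⟨z, p⟩⟩⟩ <;> simp_all
    · rintro (⟨P', hP', hP⟩ | ⟨P', hP', hP⟩) <;> obtain ⟨rfl, rfl⟩ := List.cons.inj hP' <;>
        exact ⟨by simp, by simp, _, rfl, hP⟩

theorem isMultiPartition_append {K : ℕ} {ws₁ ws₂ : List (List α)}
    {Ps : List (List (List α))} :
    IsMultiPartition K (ws₁ ++ ws₂) Ps ↔
      ∃ Ps₁ Ps₂, Ps = Ps₁ ++ Ps₂ ∧ IsMultiPartition K ws₁ Ps₁ ∧ IsMultiPartition K ws₂ Ps₂ := by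
  constructor
  · intro h
    refine ⟨Ps.take ws₁.length, Ps.drop ws₁.length, (List.take_append_drop _ _).symm, ?_, ?_⟩
    · simpa [IsMultiPartition] using List.forall₂_take ws₁.length h
    · simpa [IsMultiPartition] using List.forall₂_drop ws₁.length h
  · rintro ⟨Ps₁, Ps₂, rfl, h₁, h₂⟩
    exact List.rel_append h₁ h₂

theorem isMultiPartition_ofFn {K k : ℕ} {w : Fin k → List α} {Ps : List (List (List α))} :
    IsMultiPartition K (List.ofFn w) Ps ↔
      ∃ P : Fin k → List (List α), Ps = List.ofFn P ∧ ∀ i, IsPartition K (w i) (P i) := by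
  constructor
  · intro h
    have hlen : k = Ps.length := by simpa using h.length_eq
    subst hlen
    refine ⟨fun i => Ps[i], List.ofFn_getElem.symm, fun i => ?_⟩
    simpa using h.get (by simp) i.2
  · rintro ⟨P, rfl, hP⟩
    exact List.forall₂_of_length_eq_of_get (by simp) fun i _ _ => by simpa using hP _

theorem isMultiPartition_singleton {K : ℕ} {w : List α} {Ps : List (List (List α))} :
    IsMultiPartition K [w] Ps ↔ ∃ P, Ps = [P] ∧ IsPartition K w P := by
  simp [IsMultiPartition, List.forall₂_cons_left_iff, and_comm]

theorem exists_isMultiPartition_append_iff {K k l : ℕ} {cw : Fin k → List α}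
    {e₁ e₂ : Fin l → List α} {w : List α} :
    (∃ Ps, IsMultiPartition K (List.ofFn cw ++ List.ofFn e₁ ++ List.ofFn e₂ ++ [w]) Ps ∧
        PrefixFree Ps.flatten) ↔
      ∃ (C : Fin k → List (List α)) (E₁ E₂ : Fin l → List (List α)) (D : List (List α)),
        (∀ i, IsPartition K (cw i) (C i)) ∧ (∀ v, IsPartition K (e₁ v) (E₁ v)) ∧
        (∀ v, IsPartition K (e₂ v) (E₂ v)) ∧ IsPartition K w D ∧
        PrefixFree
          ((List.ofFn C).flatten ++ (List.ofFn E₁).flatten ++ (List.ofFn E₂).flatten ++ D) := by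
  simp only [isMultiPartition_append, isMultiPartition_ofFn, isMultiPartition_singleton]
  constructor
  · rintro ⟨_, ⟨_, _, rfl, ⟨_, _, rfl, ⟨_, _, rfl, ⟨C, rfl, hC⟩, E₁, rfl, hE₁⟩, E₂, rfl, hE₂⟩,
      D, rfl, hD⟩, hpf⟩
    exact ⟨C, E₁, E₂, D, hC, hE₁, hE₂, hD, by simpa using hpf⟩
  · rintro ⟨C, E₁, E₂, D, hC, hE₁, hE₂, hD, hpf⟩
    exact ⟨_, ⟨_, _, rfl, ⟨_, _, rfl, ⟨_, _, rfl, ⟨C, rfl, hC⟩, E₁, rfl, hE₁⟩, E₂, rfl, hE₂⟩,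
      D, rfl, hD⟩, by simpa using hpf⟩

theorem intersperse_append_cons (d a : α) (A B : List α) :
    (A ++ a :: B).intersperse d =
      (A.map fun x => [x, d]).flatten ++ a :: (B.map fun y => [d, y]).flatten := by
  induction A with
  | nil =>
    induction B generalizing a with
    | nil => rfl
    | cons b B ih => simpa using ih b
  | cons x A ih =>
    obtain ⟨y, l, hl⟩ := List.exists_cons_of_ne_nil (List.append_ne_nil_of_right_ne_nil A
      (List.cons_ne_nil a B))
    rw [List.cons_append, hl, List.intersperse_cons_cons, ← hl, ih]
    simp

theorem eq_of_isPartition_two_of_prefixFree {a : α} {P : List (List α)}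
    (hP : IsPartition 2 [a, a] P) (hpf : PrefixFree P) : P = [[a, a]] := by
  simp only [isPartition_two_cons_cons_iff, isPartition_two_singleton_iff,
    isPartition_two_nil_iff] at hP
  rcases hP with ⟨_, rfl, rfl⟩ | ⟨_, rfl, rfl⟩
  · simp [PrefixFree] at hpf
  · rfl

theorem _root_.List.Forall₂.exists_of_mem_right {β : Type*} {R : α → β → Prop} {l₁ : List α}
    {l₂ : List β} (h : List.Forall₂ R l₁ l₂) {b : β} (hb : b ∈ l₂) : ∃ a ∈ l₁, R a b := by
  induction h with
  | nil => simp at hb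
  | cons hab _ ih =>
    rcases List.mem_cons.1 hb with rfl | hb
    · exact ⟨_, List.mem_cons_self, hab⟩
    · obtain ⟨a, ha, hab⟩ := ih hb
      exact ⟨a, List.mem_cons_of_mem _ ha, hab⟩

def IsSplitPiece (d x : α) (c : List α) : Prop := c = [x, d] ∨ c = [x] ∨ c = [d, x]

theorem IsSplitPiece.incomparable {d x y : α} {c c' : List α} (hc : IsSplitPiece d x c)
    (hc' : IsSplitPiece d y c') (hx : x ≠ d) (hy : y ≠ d) (hxy : x ≠ y) : Incomparable c c' := by
  rcases hc with rfl | rfl | rfl <;> rcases hc' with rfl | rfl | rfl <;>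
    simp [Incomparable, hx, hy, hxy, hx.symm, hy.symm, hxy.symm]

theorem prefixFree_of_forall₂_isSplitPiece {d : α} {xs : List α} {P : List (List α)}
    (h : List.Forall₂ (IsSplitPiece d) xs P) (hxs : xs.Nodup) (hd : d ∉ xs) : PrefixFree P := by
  induction h with
  | nil => exact List.Pairwise.nil
  | @cons x c xs P hc h ih =>
    rw [List.nodup_cons] at hxs
    rw [List.mem_cons, not_or] at hd
    refine List.Pairwise.cons (fun c' hc' => ?_) (ih hxs.2 hd.2)
    obtain ⟨y, hy, hc'⟩ := h.exists_of_mem_right hc'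
    exact hc.incomparable hc' (Ne.symm hd.1) (fun h => hd.2 (h ▸ hy)) (fun h => hxs.1 (h ▸ hy))

theorem exists_isPartition_intersperse (d : α) {L : List α} {a : α} (ha : a ∈ L) :
    ∃ P, IsPartition 2 (L.intersperse d) P ∧ List.Forall₂ (IsSplitPiece d) L P ∧
      ∀ x, [x] ∈ P → x = a := by
  obtain ⟨A, B, rfl⟩ := List.append_of_mem ha
  refine ⟨A.map (fun x => [x, d]) ++ [a] :: B.map (fun y => [d, y]), ⟨?_, ?_⟩, ?_, ?_⟩
  · simp [intersperse_append_cons]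
  · simp only [List.mem_append, List.mem_map, List.mem_cons]
    rintro p (⟨x, -, rfl⟩ | rfl | ⟨y, -, rfl⟩) <;> simp
  · refine List.rel_append ?_ (List.Forall₂.cons (Or.inr (Or.inl rfl)) ?_) <;>
      simp [List.forall₂_map_right_iff, List.forall₂_same, IsSplitPiece]
  · simp

theorem exists_singleton_mem_of_isPartition_intersperse {d : α} {L : List α}
    {P : List (List α)} (hL : L ≠ []) (hP : IsPartition 2 (L.intersperse d) P) (hd : [d] ∉ P) :
    ∃ a ∈ L, [a] ∈ P := by
  induction L generalizing P with
  | nil => contradiction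
  | cons a L ih =>
    cases L with
    | nil =>
      rw [List.intersperse_singleton, isPartition_two_singleton_iff] at hP
      exact ⟨a, by simp, by simp [hP]⟩
    | cons b L =>
      rw [List.intersperse_cons_cons, isPartition_two_cons_cons_iff] at hP
      rcases hP with ⟨P', rfl, -⟩ | ⟨P', rfl, hP'⟩
      · exact ⟨a, by simp, by simp⟩
      · obtain ⟨c, hc, hcP⟩ := ih (List.cons_ne_nil _ _) hP' (fun h => hd (by simp [h]))
        exact ⟨c, by simp [hc], by simp [hcP]⟩

theorem singleton_not_mem_of_isPartition {x p q y : α} {C E : List (List α)}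
    (hE : IsPartition 2 [x, p, q, y] E) (hCE : ∀ c ∈ C, ∀ e ∈ E, Incomparable c e)
    (hp : [p] ∈ C) : [q] ∉ C := by
  intro hq
  -- the piece containing `q` starts at `p` or at `q`
  obtain ⟨e, he, hpe | hqe⟩ : ∃ e ∈ E, [p] <+: e ∨ [q] <+: e := by
    simp only [isPartition_two_cons_cons_iff, isPartition_two_singleton_iff,
      isPartition_two_nil_iff] at hE
    rcases hE with ⟨_, rfl, ⟨_, rfl, ⟨_, rfl, rfl⟩ | ⟨_, rfl, rfl⟩⟩ | ⟨_, rfl, rfl⟩⟩ |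
      ⟨_, rfl, ⟨_, rfl, rfl⟩ | ⟨_, rfl, rfl⟩⟩ <;> simp
  exacts [(hCE _ hp e he).1 hpe, (hCE _ hq e he).1 hqe]

end General

section Reduction

variable {n m : ℕ}

def enforcerPieces (t : Bool) (v : Fin n) (a b : Fin 4) (p q : Fin m × ℕ) :
    List (List (PLetter n m)) :=
  if t then [[.var v a, .lit p.1 p.2], [.lit q.1 q.2, .var v b]]
  else [[.var v a], [.lit p.1 p.2, .lit q.1 q.2], [.var v b]]

def enforcerBlock (τ : Fin n → Bool) (a b : Fin 4) (pos neg : Fin n → Fin m × ℕ) :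
    List (List (PLetter n m)) :=
  (List.ofFn fun v => enforcerPieces (τ v) v a b (pos v) (neg v)).flatten

theorem isPartition_enforcerPieces (t : Bool) (v : Fin n) (a b : Fin 4) (p q : Fin m × ℕ) :
    IsPartition 2 [.var v a, .lit p.1 p.2, .lit q.1 q.2, .var v b]
      (enforcerPieces t v a b p q) := by
  cases t <;> simp [enforcerPieces, IsPartition]

theorem prefixFree_enforcerPieces {a b : Fin 4} (hab : a ≠ b) (t : Bool) (v : Fin n)
    (p q : Fin m × ℕ) : PrefixFree (enforcerPieces t v a b p q) := by
  cases t <;> simp [enforcerPieces, PrefixFree, hab, hab.symm]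

theorem incomparable_of_mem_enforcerPieces {t t' : Bool} {v v' : Fin n} {a b a' b' : Fin 4}
    {p q p' q' : Fin m × ℕ} (hvar : ∀ c ∈ [a, b], ∀ c' ∈ [a', b'], (v, c) ≠ (v', c'))
    (hp : p ≠ p') {e e' : List (PLetter n m)} (he : e ∈ enforcerPieces t v a b p q)
    (he' : e' ∈ enforcerPieces t' v' a' b' p' q') : Incomparable e e' := by
  rw [Ne, Prod.ext_iff] at hp
  simp only [List.mem_cons, List.not_mem_nil, or_false, forall_eq_or_imp, forall_eq, ne_eq,
    Prod.mk.injEq] at hvar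
  cases t <;> cases t' <;> simp only [enforcerPieces, Bool.false_eq_true, if_false, if_true,
    List.mem_cons, List.not_mem_nil, or_false] at he he' <;>
    rcases he with rfl | rfl | rfl <;> rcases he' with rfl | rfl | rfl <;>
    simp only [Incomparable, List.cons_prefix_cons, List.prefix_nil, PLetter.var.injEq,
      PLetter.lit.injEq, reduceCtorEq] <;> grind

theorem mem_enforcerBlock {τ : Fin n → Bool} {a b : Fin 4} {pos neg : Fin n → Fin m × ℕ}
    {e : List (PLetter n m)} :
    e ∈ enforcerBlock τ a b pos neg ↔ ∃ v, e ∈ enforcerPieces (τ v) v a b (pos v) (neg v) := by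
  simp only [enforcerBlock, mem_flatten_ofFn]

theorem prefixFree_enforcerBlock {a b : Fin 4} (hab : a ≠ b) (τ : Fin n → Bool)
    {pos : Fin n → Fin m × ℕ} (hpos : pos.Injective) (neg : Fin n → Fin m × ℕ) :
    PrefixFree (enforcerBlock τ a b pos neg) :=
  prefixFree_flatten_ofFn (fun v => prefixFree_enforcerPieces hab _ _ _ _)
    fun _ _ hvv' _ he _ he' =>
      incomparable_of_mem_enforcerPieces (by simp [hvv']) (hpos.ne hvv') he he'

theorem incomparable_of_mem_enforcerBlock {τ : Fin n → Bool} {a b a' b' : Fin 4}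
    (hvar : ∀ c ∈ [a, b], c ∉ [a', b']) {pos pos' neg neg' : Fin n → Fin m × ℕ}
    (hpos : ∀ v v', pos v ≠ pos' v') {e e' : List (PLetter n m)}
    (he : e ∈ enforcerBlock τ a b pos neg) (he' : e' ∈ enforcerBlock τ a' b' pos' neg') :
    Incomparable e e' := by
  obtain ⟨v, he⟩ := mem_enforcerBlock.1 he
  obtain ⟨v', he'⟩ := mem_enforcerBlock.1 he'
  exact incomparable_of_mem_enforcerPieces
    (fun c hc c' hc' h => hvar c hc (by simpa [(Prod.mk.inj h).2] using hc')) (hpos v v') he he'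

theorem incomparable_of_isSplitPiece_of_mem_enforcerPieces {o : Fin m × ℕ}
    {c e : List (PLetter n m)} (hc : IsSplitPiece .dollar (.lit o.1 o.2) c) {t : Bool}
    {v : Fin n} {a b : Fin 4} {p q : Fin m × ℕ}
    (hsingle : c = [.lit o.1 o.2] → o ≠ if t then q else p)
    (he : e ∈ enforcerPieces t v a b p q) : Incomparable c e := by
  rcases hc with rfl | rfl | rfl <;> cases t <;>
    simp only [enforcerPieces, Bool.false_eq_true, if_false, if_true, List.mem_cons,
      List.not_mem_nil, or_false, forall_const, ne_eq, Prod.ext_iff, reduceCtorEq,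
      List.cons.injEq, and_false, false_implies] at he hsingle <;>
    rcases he with rfl | rfl | rfl <;>
    simp only [Incomparable, List.cons_prefix_cons, List.prefix_nil, PLetter.lit.injEq,
      reduceCtorEq] <;> grind

theorem incomparable_dollar_dollar_of_isSplitPiece {o : Fin m × ℕ} {c : List (PLetter n m)}
    (hc : IsSplitPiece .dollar (.lit o.1 o.2) c) : Incomparable c [.dollar, .dollar] := by
  rcases hc with rfl | rfl | rfl <;> simp [Incomparable]

theorem incomparable_dollar_dollar_of_mem_enforcerPieces {t : Bool} {v : Fin n} {a b : Fin 4}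
    {p q : Fin m × ℕ} {e : List (PLetter n m)} (he : e ∈ enforcerPieces t v a b p q) :
    Incomparable e [.dollar, .dollar] := by
  cases t <;> simp only [enforcerPieces, Bool.false_eq_true, if_false, if_true, List.mem_cons,
    List.not_mem_nil, or_false] at he <;> rcases he with rfl | rfl | rfl <;> simp [Incomparable]

section Formula

variable {clauses : Fin m → List (Fin n × Bool)}

theorem eq_of_occurrence_eq {o o' : Fin m × ℕ} {x x' : Fin n × Bool}
    (h : (clauses o.1)[o.2]? = some x) (h' : (clauses o'.1)[o'.2]? = some x') (ho : o = o') :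
    x = x' := by
  subst ho
  simpa [h] using h'

variable (clauses) in
def clauseLetters (i : Fin m) : List (PLetter n m) :=
  (List.range (clauses i).length).map fun j => .lit i j

theorem nodup_flatten_ofFn_clauseLetters : (List.ofFn (clauseLetters clauses)).flatten.Nodup := by
  refine List.nodup_flatten.2 ⟨?_, List.pairwise_ofFn.2 fun i i' hii' => ?_⟩
  · simp only [List.mem_ofFn, forall_exists_index, forall_apply_eq_imp_iff]
    exact fun i => List.nodup_range.map fun j j' h => by simpa using h
  · simp [clauseLetters, List.disjoint_left, hii'.ne']

variable (clauses) in
def IsClausePiece (τ : Fin n → Bool) (c : List (PLetter n m)) : Prop :=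
  ∃ o : Fin m × ℕ, IsSplitPiece .dollar (.lit o.1 o.2) c ∧
    (c = [.lit o.1 o.2] → ∃ x, (clauses o.1)[o.2]? = some x ∧ τ x.1 = x.2)

theorem exists_clausePieces {τ : Fin n → Bool} (hτ : ∀ i, ∃ x ∈ clauses i, τ x.1 = x.2) :
    ∃ Cs : Fin m → List (List (PLetter n m)),
      (∀ i, IsPartition 2 ((clauseLetters clauses i).intersperse .dollar) (Cs i)) ∧
      PrefixFree (List.ofFn Cs).flatten ∧
      ∀ c ∈ (List.ofFn Cs).flatten, IsClausePiece clauses τ c := by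
  have hpart : ∀ i, ∃ P, IsPartition 2 ((clauseLetters clauses i).intersperse .dollar) P ∧
      List.Forall₂ (IsSplitPiece .dollar) (clauseLetters clauses i) P ∧
      ∀ c ∈ P, IsClausePiece clauses τ c := by
    intro i
    obtain ⟨x, hx, hτx⟩ := hτ i
    obtain ⟨j, hj⟩ := List.mem_iff_getElem?.1 hx
    have hjlen : j < (clauses i).length := (List.getElem?_eq_some_iff.1 hj).1
    obtain ⟨P, hP, hsplit, hsingle⟩ :=
      exists_isPartition_intersperse .dollar (List.mem_map_of_mem (f := PLetter.lit i)
        (List.mem_range.2 hjlen))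
    refine ⟨P, hP, hsplit, fun c hc => ?_⟩
    obtain ⟨_, hy, hyc⟩ := hsplit.exists_of_mem_right hc
    obtain ⟨j', -, rfl⟩ := List.mem_map.1 hy
    refine ⟨(i, j'), hyc, fun hc' => ⟨x, ?_, hτx⟩⟩
    obtain rfl : j' = j := (PLetter.lit.inj (hsingle _ (hc' ▸ hc))).2
    exact hj
  choose Cs hCs hsplit hpieces using hpart
  have hsplit' : List.Forall₂ (IsSplitPiece .dollar) (List.ofFn (clauseLetters clauses)).flatten
      (List.ofFn Cs).flatten :=
    List.rel_flatten <| List.forall₂_of_length_eq_of_get (by simp) fun k _ _ => by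
      simpa using hsplit _
  refine ⟨Cs, hCs, prefixFree_of_forall₂_isSplitPiece hsplit' nodup_flatten_ofFn_clauseLetters
    (by simp [clauseLetters]), fun c hc => ?_⟩
  obtain ⟨i, hc⟩ := mem_flatten_ofFn.1 hc
  exact hpieces i c hc

theorem incomparable_of_isClausePiece_of_mem_enforcerBlock {τ : Fin n → Bool}
    {pos neg : Fin n → Fin m × ℕ} (hpos : ∀ v, (clauses (pos v).1)[(pos v).2]? = some (v, true))
    (hneg : ∀ v, (clauses (neg v).1)[(neg v).2]? = some (v, false)) {a b : Fin 4}
    {c e : List (PLetter n m)} (hc : IsClausePiece clauses τ c)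
    (he : e ∈ enforcerBlock τ a b pos neg) : Incomparable c e := by
  obtain ⟨o, hsplit, hsat⟩ := hc
  obtain ⟨v, he⟩ := mem_enforcerBlock.1 he
  refine incomparable_of_isSplitPiece_of_mem_enforcerPieces hsplit (fun hc ho => ?_) he
  obtain ⟨x, hx, hτx⟩ := hsat hc
  cases hv : τ v <;> simp only [hv, if_true, Bool.false_eq_true, if_false] at ho
  · obtain rfl := eq_of_occurrence_eq hx (hpos v) ho
    simp_all
  · obtain rfl := eq_of_occurrence_eq hx (hneg v) ho
    simp_all

theorem prefixFree_append_enforcerBlocks {pos1 pos2 neg : Fin n → Fin m × ℕ}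
    (hpos1 : ∀ v, (clauses (pos1 v).1)[(pos1 v).2]? = some (v, true))
    (hpos2 : ∀ v, (clauses (pos2 v).1)[(pos2 v).2]? = some (v, true))
    (hneg : ∀ v, (clauses (neg v).1)[(neg v).2]? = some (v, false))
    (hdist : ∀ v, pos1 v ≠ pos2 v) {τ : Fin n → Bool} {C : List (List (PLetter n m))}
    (hC : PrefixFree C) (hpieces : ∀ c ∈ C, IsClausePiece clauses τ c) :
    PrefixFree (C ++ enforcerBlock τ 0 1 pos1 neg ++ enforcerBlock τ 2 3 pos2 neg ++
      [[.dollar, .dollar]]) := by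
  have hinj : ∀ {pos : Fin n → Fin m × ℕ},
      (∀ v, (clauses (pos v).1)[(pos v).2]? = some (v, true)) → pos.Injective :=
    fun hpos v v' h => (Prod.mk.inj (eq_of_occurrence_eq (hpos v) (hpos v') h)).1
  have h12 : ∀ v v', pos1 v ≠ pos2 v' := fun v v' h => by
    obtain rfl := (Prod.mk.inj (eq_of_occurrence_eq (hpos1 v) (hpos2 v') h)).1
    exact hdist v h
  simp only [prefixFree_append, List.mem_append, List.mem_singleton]
  refine ⟨⟨⟨hC, prefixFree_enforcerBlock (by decide) τ (hinj hpos1) neg, fun c hc e he => ?_⟩,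
    prefixFree_enforcerBlock (by decide) τ (hinj hpos2) neg, ?_⟩, by simp [PrefixFree], ?_⟩
  · exact incomparable_of_isClausePiece_of_mem_enforcerBlock hpos1 hneg (hpieces c hc) he
  · rintro c (hc | hc) e he
    · exact incomparable_of_isClausePiece_of_mem_enforcerBlock hpos2 hneg (hpieces c hc) he
    · exact incomparable_of_mem_enforcerBlock (by decide) h12 hc he
  · rintro c ((hc | hc) | hc) _ rfl
    · obtain ⟨_, hsplit, -⟩ := hpieces c hc
      exact incomparable_dollar_dollar_of_isSplitPiece hsplit
    all_goals
      obtain ⟨v, hc⟩ := mem_enforcerBlock.1 hc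
      exact incomparable_dollar_dollar_of_mem_enforcerPieces hc

theorem satisfiable_of_prefixFree (hne : ∀ i, clauses i ≠ []) {pos1 pos2 neg : Fin n → Fin m × ℕ}
    (hpos1 : ∀ v, (clauses (pos1 v).1)[(pos1 v).2]? = some (v, true))
    (hpos2 : ∀ v, (clauses (pos2 v).1)[(pos2 v).2]? = some (v, true))
    (hneg : ∀ v, (clauses (neg v).1)[(neg v).2]? = some (v, false))
    (hocc : ∀ (v : Fin n) (b : Bool) (i : Fin m) (j : ℕ),
      (clauses i)[j]? = some (v, b) → (i, j) = pos1 v ∨ (i, j) = pos2 v ∨ (i, j) = neg v)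
    {Cs : Fin m → List (List (PLetter n m))} {E₁ E₂ : Fin n → List (List (PLetter n m))}
    (hC : ∀ i, IsPartition 2 ((clauseLetters clauses i).intersperse .dollar) (Cs i))
    (hE₁ : ∀ v, IsPartition 2 [PLetter.var v 0, PLetter.lit (pos1 v).1 (pos1 v).2,
      PLetter.lit (neg v).1 (neg v).2, PLetter.var v 1] (E₁ v))
    (hE₂ : ∀ v, IsPartition 2 [PLetter.var v 2, PLetter.lit (pos2 v).1 (pos2 v).2,
      PLetter.lit (neg v).1 (neg v).2, PLetter.var v 3] (E₂ v))
    (hdollar : [PLetter.dollar] ∉ (List.ofFn Cs).flatten)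
    (hCE₁ : ∀ c ∈ (List.ofFn Cs).flatten, ∀ e ∈ (List.ofFn E₁).flatten, Incomparable c e)
    (hCE₂ : ∀ c ∈ (List.ofFn Cs).flatten, ∀ e ∈ (List.ofFn E₂).flatten, Incomparable c e) :
    ∃ τ : Fin n → Bool, ∀ i, ∃ x ∈ clauses i, τ x.1 = x.2 := by
  classical
  set C := (List.ofFn Cs).flatten
  refine ⟨fun v => decide ([PLetter.lit (neg v).1 (neg v).2] ∉ C), fun i => ?_⟩
  obtain ⟨_, ha, hjC⟩ := exists_singleton_mem_of_isPartition_intersperse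
    (by simpa [clauseLetters] using hne i) (hC i) fun h => hdollar (mem_flatten_ofFn.2 ⟨i, h⟩)
  obtain ⟨j, hj, rfl⟩ := List.mem_map.1 ha
  have hjlen : j < (clauses i).length := List.mem_range.1 hj
  have hjC : [PLetter.lit i j] ∈ C := mem_flatten_ofFn.2 ⟨i, hjC⟩
  obtain ⟨⟨v, b⟩, hx⟩ : ∃ x, (clauses i)[j]? = some x := ⟨_, List.getElem?_eq_getElem hjlen⟩
  refine ⟨(v, b), List.mem_of_getElem? hx, ?_⟩
  rcases hocc v b i j hx with h | h | h
  · obtain rfl := (Prod.mk.inj (eq_of_occurrence_eq hx (hpos1 v) h)).2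
    simpa using singleton_not_mem_of_isPartition (hE₁ v)
      (fun c hc e he => hCE₁ c hc e (mem_flatten_ofFn.2 ⟨v, he⟩)) (h ▸ hjC)
  · obtain rfl := (Prod.mk.inj (eq_of_occurrence_eq hx (hpos2 v) h)).2
    simpa using singleton_not_mem_of_isPartition (hE₂ v)
      (fun c hc e he => hCE₂ c hc e (mem_flatten_ofFn.2 ⟨v, he⟩)) (h ▸ hjC)
  · obtain rfl := (Prod.mk.inj (eq_of_occurrence_eq hx (hneg v) h)).2
    simpa using h ▸ hjC

end Formula

end Reduction

end PrefixFreePartition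

open PrefixFreePartition in
/-- A 3SAT(3) instance (clauses of two or three literals; each variable occurs
twice positive, at `pos1 v` and `pos2 v`, and once negated, at `neg v`) is
satisfiable iff the multiset consisting of the clause strings
`ĉ_i^1 $ ĉ_i^2 ($ ĉ_i^3)`, the two enforcer strings
`x̂_v^1 ĉ_i^p ĉ_k^r x̂_v^2` and `x̂_v^3 ĉ_j^q ĉ_k^r x̂_v^4` per variable, and the
forbidden string `$$` has a prefix-free `2`-partition. -/
theorem stmt_18 (n m : ℕ) (clauses : Fin m → List (Fin n × Bool))
    (hlen : ∀ i, (clauses i).length = 2 ∨ (clauses i).length = 3)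
    (pos1 pos2 neg : Fin n → Fin m × ℕ)
    (hpos1 : ∀ v, (clauses (pos1 v).1)[(pos1 v).2]? = some (v, true))
    (hpos2 : ∀ v, (clauses (pos2 v).1)[(pos2 v).2]? = some (v, true))
    (hneg : ∀ v, (clauses (neg v).1)[(neg v).2]? = some (v, false))
    (hdist : ∀ v, pos1 v ≠ pos2 v)
    (hocc : ∀ (v : Fin n) (b : Bool) (i : Fin m) (j : ℕ),
      (clauses i)[j]? = some (v, b) →
        (i, j) = pos1 v ∨ (i, j) = pos2 v ∨ (i, j) = neg v) :
    (∃ τ : Fin n → Bool, ∀ i, ∃ p ∈ clauses i, τ p.1 = p.2) ↔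
    (∃ Ps, IsMultiPartition 2
      ((List.ofFn fun i : Fin m =>
          List.intersperse (PLetter.dollar : PLetter n m)
            ((List.range (clauses i).length).map fun j => PLetter.lit i j)) ++
       (List.ofFn fun v : Fin n =>
          [PLetter.var v 0, PLetter.lit (pos1 v).1 (pos1 v).2,
           PLetter.lit (neg v).1 (neg v).2, PLetter.var v 1]) ++
       (List.ofFn fun v : Fin n =>
          [PLetter.var v 2, PLetter.lit (pos2 v).1 (pos2 v).2,
           PLetter.lit (neg v).1 (neg v).2, PLetter.var v 3]) ++
       [[PLetter.dollar, PLetter.dollar]]) Ps ∧ PrefixFree Ps.flatten) := by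
  rw [exists_isMultiPartition_append_iff]
  constructor
  · rintro ⟨τ, hτ⟩
    obtain ⟨Cs, hCs, hpf, hpieces⟩ := exists_clausePieces hτ
    exact ⟨Cs, _, _, _, hCs, fun v => isPartition_enforcerPieces (τ v) v 0 1 (pos1 v) (neg v),
      fun v => isPartition_enforcerPieces (τ v) v 2 3 (pos2 v) (neg v), by simp [IsPartition],
      prefixFree_append_enforcerBlocks hpos1 hpos2 hneg hdist hpf hpieces⟩
  · rintro ⟨Cs, E₁, E₂, D, hCs, hE₁, hE₂, hD, hpf⟩
    simp only [prefixFree_append, List.mem_append] at hpf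
    obtain ⟨⟨⟨-, -, hCE₁⟩, -, hCE₂⟩, hD', hCD⟩ := hpf
    obtain rfl := eq_of_isPartition_two_of_prefixFree hD hD'
    have hne : ∀ i, clauses i ≠ [] := fun i =>
      List.ne_nil_of_length_pos (by rcases hlen i with h | h <;> omega)
    exact satisfiable_of_prefixFree hne hpos1 hpos2 hneg hocc hCs hE₁ hE₂
      (fun h => (hCD _ (Or.inl (Or.inl h)) _ (List.mem_singleton_self _)).1 (by simp))
      hCE₁ fun c hc => hCE₂ c (Or.inl hc)
end
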